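/- Suppose μ satisfies Assumption (A) with exponent α > 0, and let T be the RSTRE on the complete graph K_n with disorder strength β = β(n). Let ε = ε(n) → 0 and t = t(n) ≥ 1 with t(n)·ε(n) → 0, and set p = (1 + ε)/n and q = (1 + t ε)/n. For vertices u ≠ v, let F(u,v) be the event that u and v are connected by a path of p-open edges and the path γ_T(u,v) in T contains an edge e with ω_e > F_μ^{−1}(q). Then there exists a constant c_g = c_g(μ) > 0 such that for all sufficiently large n, \hat{P}( ⋃_{u ≠ v} F(u,v) ) ≤ n^5 exp( − c_g (t − 1) β ε / n^{1/α} ). -/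

import Mathlib

open MeasureTheory Finset

attribute [local instance] Classical.propDecidable

noncomputable section RSTRECore

variable {V : Type*} [Fintype V] [DecidableEq V]

/-- `T` is a spanning tree of `G`: a subgraph (on the same vertex set) that is a tree. -/
def IsSpanningTree (G T : SimpleGraph V) : Prop := T ≤ G ∧ T.IsTree

/-- The Hamiltonian `H(T, ω) = Σ_{e ∈ T} ω_e`. -/
def Ham (T : SimpleGraph V) (ω : Sym2 V → ℝ) : ℝ := ∑ e ∈ T.edgeFinset, ω e

/-- Gibbs weight of a spanning tree: `∏_{e ∈ T} exp(-β ω_e)`. -/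
def treeGibbsWeight (β : ℝ) (ω : Sym2 V → ℝ) (T : SimpleGraph V) : ℝ :=
  ∏ e ∈ T.edgeFinset, Real.exp (-β * ω e)

/-- Quenched law of the RSTRE: probability that the random spanning tree of `G`
(with weights `exp(-β ω_e)`) lies in the set `A`. -/
def quenchedP (G : SimpleGraph V) (β : ℝ) (ω : Sym2 V → ℝ) (A : Set (SimpleGraph V)) : ℝ :=
  (∑ T ∈ univ.filter (fun T => IsSpanningTree G T ∧ T ∈ A), treeGibbsWeight β ω T) /
    (∑ T ∈ univ.filter (fun T => IsSpanningTree G T), treeGibbsWeight β ω T)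

/-- Quenched expectation of an observable of the RSTRE. -/
def quenchedE (G : SimpleGraph V) (β : ℝ) (ω : Sym2 V → ℝ) (f : SimpleGraph V → ℝ) : ℝ :=
  (∑ T ∈ univ.filter (fun T => IsSpanningTree G T), treeGibbsWeight β ω T * f T) /
    (∑ T ∈ univ.filter (fun T => IsSpanningTree G T), treeGibbsWeight β ω T)

/-- The law of the i.i.d. environment `(ω_e)` with marginal `μ`. -/
def envMeasure (μ : Measure ℝ) : Measure (Sym2 V → ℝ) := Measure.pi fun _ => μ

/-- Averaged (annealed) law of the RSTRE, for an event which may also depend on the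
environment. -/
def avgP (μ : Measure ℝ) (G : SimpleGraph V) (β : ℝ)
    (A : (Sym2 V → ℝ) → Set (SimpleGraph V)) : ℝ :=
  ∫ ω, quenchedP G β ω (A ω) ∂(envMeasure μ)

/-- Averaged (annealed) expectation of an observable of environment and tree. -/
def avgE (μ : Measure ℝ) (G : SimpleGraph V) (β : ℝ)
    (f : (Sym2 V → ℝ) → SimpleGraph V → ℝ) : ℝ :=
  ∫ ω, quenchedE G β ω (f ω) ∂(envMeasure μ)

/-- Diameter of a graph: the maximal graph distance between two vertices. -/
def gdiam (G : SimpleGraph V) : ℕ :=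
  (Finset.univ : Finset (V × V)).sup fun p => G.dist p.1 p.2

/-- Volume of a vertex set: the sum of the degrees. -/
def gvol (G : SimpleGraph V) (S : Finset V) : ℕ := ∑ v ∈ S, G.degree v

/-- Number of edges between `S` and its complement. -/
def cutCard (G : SimpleGraph V) (S : Finset V) : ℕ :=
  (univ.filter fun p : V × V => p.1 ∈ S ∧ p.2 ∉ S ∧ G.Adj p.1 p.2).card

/-- Edge expansion of a vertex set `S`. -/
def edgeExpansion (G : SimpleGraph V) (S : Finset V) : ℝ :=
  (cutCard G S : ℝ) / min (gvol G S : ℝ) (gvol G Sᶜ : ℝ)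

/-- `G` is a `b`-expander: every nonempty proper vertex set has edge expansion at least `b`. -/
def IsExpander (G : SimpleGraph V) (b : ℝ) : Prop :=
  ∀ S : Finset V, S.Nonempty → S ≠ univ → b ≤ edgeExpansion G S

/-- The generalized inverse CDF `F_μ⁻¹(p) = inf { t | F_μ(t) ≥ p }`. -/
def invCDF (μ : Measure ℝ) (p : ℝ) : ℝ := sInf {t : ℝ | p ≤ (μ (Set.Iic t)).toReal}

/-- Assumption (A): `μ` is supported on `[0,∞)` and its CDF satisfies
`F_μ(t) = c_μ t^α` for `0 ≤ t ≤ ρ`. -/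
def AssumptionA (μ : Measure ℝ) (α : ℝ) : Prop :=
  0 < α ∧ μ (Set.Iio 0) = 0 ∧
    ∃ cμ > (0:ℝ), ∃ ρ > (0:ℝ), ∀ t : ℝ, 0 ≤ t → t ≤ ρ →
      (μ (Set.Iic t)).toReal = cμ * t ^ α

end RSTRECore

noncomputable section Percolation

attribute [local instance] Classical.propDecidable

variable {V : Type*} [Fintype V] [DecidableEq V]

/-- The subgraph of `p`-open edges: `e` is `p`-open when `ω_e ≤ F_μ⁻¹(p)`. -/
def openGraph (μ : Measure ℝ) (ω : Sym2 V → ℝ) (p : ℝ) : SimpleGraph V where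
  Adj u v := u ≠ v ∧ ω s(u, v) ≤ invCDF μ p
  symm := ⟨by
    rintro u v ⟨h1, h2⟩
    exact ⟨h1.symm, by rwa [Sym2.eq_swap]⟩⟩
  loopless := ⟨fun u h => h.1 rfl⟩

/-- The connected component of `v` in `H`, as a finset. -/
def compFinset (H : SimpleGraph V) (v : V) : Finset V :=
  Finset.univ.filter fun u => H.Reachable v u

/-- The vertex set of a largest connected component of `H` (ties broken by choice). -/
def C1verts (H : SimpleGraph V) : Finset V :=
  if h : (Finset.univ : Finset V).Nonempty then
    compFinset H
      (Finset.exists_max_image Finset.univ (fun v => (compFinset H v).card) h).choose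
  else ∅

/-- The minimal subtree `T_A` of `T` spanning the vertex set `A`: the union of the
paths of `T` between pairs of points of `A` (as a graph on `V`, all other vertices
being isolated). -/
def minimalSubtree (T : SimpleGraph V) (A : Set V) : SimpleGraph V where
  Adj x y := ∃ u ∈ A, ∃ v ∈ A, ∃ q : T.Walk u v, q.IsPath ∧ s(x, y) ∈ q.edges
  symm := ⟨by
    rintro x y ⟨u, hu, v, hv, q, hq, he⟩
    exact ⟨u, hu, v, hv, q, hq, by rwa [Sym2.eq_swap]⟩⟩
  loopless := ⟨by
    rintro x ⟨u, hu, v, hv, q, hq, he⟩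
    exact T.irrefl (T.mem_edgeSet.mp (q.edges_subset_edgeSet he))⟩

/-- The vertex set of the minimal subtree `T_A`. -/
def subtreeVerts (T : SimpleGraph V) (A : Set V) : Set V :=
  {x | ∃ u ∈ A, ∃ v ∈ A, ∃ q : T.Walk u v, q.IsPath ∧ x ∈ q.support}

/-- Graph distance from a vertex to a set of vertices. -/
def distToSet (T : SimpleGraph V) (v : V) (B : Set V) : ℕ :=
  sInf {d : ℕ | ∃ u ∈ B, T.dist v u = d}

/-- `g_i = (5/4)^{i/2} g₀`. -/
def gSeq (g₀ : ℝ) (i : ℕ) : ℝ := (5 / 4 : ℝ) ^ ((i : ℝ) / 2) * g₀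

/-- `p_i = (1 + g_i ε)/n`. -/
def pSeq (g₀ ε : ℝ) (n : ℕ) (i : ℕ) : ℝ := (1 + gSeq g₀ i * ε) / n

/-- `m = min{ i ≥ 0 : g_i ε ≥ 1/log n }`. -/
def mIdx (g₀ ε : ℝ) (n : ℕ) : ℕ := sInf {i : ℕ | 1 / Real.log n ≤ gSeq g₀ i * ε}

end Percolation

/-!
Let `T` be a spanning tree in the event: some edge `e` with `ω_e > F⁻¹(q)` lies on the tree path
between two vertices `u`, `v` that are joined by a `p`-open path. That open path crosses the cut
of `T - e` at a `p`-open edge `f`, and `T' = T - e + f` is again a spanning tree whose Gibbs weight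
exceeds that of `T` by a factor at least `exp (β (F⁻¹(q) - F⁻¹(p)))`. As `T` is recovered from
`(T', e, f)`, summing over `T` costs at most a factor `|Sym2 V|² ≤ n⁴`. Under Assumption (A),
`F⁻¹(s) = (s / c_μ) ^ (1/α)` for small `s`, and the mean value theorem for `x ↦ (1 + x) ^ (1/α)`
on `[0, 1/2]` gives `F⁻¹(q) - F⁻¹(p) ≥ (2 / (3α)) c_μ^(-1/α) (t - 1) ε / n^(1/α)`.
When `ε < 0` the right-hand side is at least `1`.
-/

namespace SimpleGraph

variable {V : Type*} {G H T : SimpleGraph V}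

theorem Walk.reachable_deleteEdges_or {a b z c : V} (p : G.Walk z c)
    (hc : (G.deleteEdges {s(a, b)}).Reachable c a ∨ (G.deleteEdges {s(a, b)}).Reachable c b) :
    (G.deleteEdges {s(a, b)}).Reachable z a ∨ (G.deleteEdges {s(a, b)}).Reachable z b := by
  induction p with
  | nil => exact hc
  | @cons x y c hxy p ih =>
    by_cases he : s(x, y) = s(a, b)
    · rcases Sym2.eq_iff.mp he with ⟨rfl, -⟩ | ⟨rfl, -⟩
      exacts [Or.inl .rfl, Or.inr .rfl]
    · have hH : (G.deleteEdges {s(a, b)}).Adj x y := by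
        simp only [deleteEdges_adj, Set.mem_singleton_iff]
        exact ⟨hxy, he⟩
      exact (ih hc).imp hH.reachable.trans hH.reachable.trans

theorem Preconnected.reachable_deleteEdges_or (hG : G.Preconnected) (a b z : V) :
    (G.deleteEdges {s(a, b)}).Reachable z a ∨ (G.deleteEdges {s(a, b)}).Reachable z b := by
  obtain ⟨p⟩ := hG z a
  exact p.reachable_deleteEdges_or (Or.inl .rfl)

theorem IsTree.deleteEdges_sup_edge_of_not_reachable {a b x y : V} (hT : T.IsTree)
    (hxy : ¬(T.deleteEdges {s(a, b)}).Reachable x y) :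
    (T.deleteEdges {s(a, b)} ⊔ edge x y).IsTree := by
  set H := T.deleteEdges {s(a, b)}
  have hle : H ≤ H ⊔ edge x y := le_sup_left
  have hne : x ≠ y := by rintro rfl; exact hxy .rfl
  have hx_y : (H ⊔ edge x y).Reachable x y := Adj.reachable (by simp [edge_adj, hne])
  have hside := hT.connected.preconnected.reachable_deleteEdges_or a b
  have hab : (H ⊔ edge x y).Reachable a b := by
    rcases hside x with hxa | hxb <;> rcases hside y with hya | hyb
    · exact absurd (hxa.trans hya.symm) hxy
    · exact ((hxa.symm.mono hle).trans hx_y).trans (hyb.mono hle)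
    · exact ((hya.symm.mono hle).trans hx_y.symm).trans (hxb.mono hle)
    · exact absurd (hxb.trans hyb.symm) hxy
  have hreach_a : ∀ z, (H ⊔ edge x y).Reachable z a := fun z =>
    (hside z).elim (·.mono hle) fun h => (h.mono hle).trans hab.symm
  have : Nonempty V := ⟨a⟩
  exact ⟨.mk fun z w => (hreach_a z).trans (hreach_a w).symm,
    (hT.isAcyclic.anti (deleteEdges_le _)).sup_edge_of_not_reachable hxy⟩

theorem IsAcyclic.not_reachable_deleteEdges_of_mem_edges (hT : T.IsAcyclic) {u v : V}
    {p : T.Walk u v} (hp : p.IsPath) {e : Sym2 V} (he : e ∈ p.edges) :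
    ¬(T.deleteEdges {e}).Reachable u v := by
  rintro ⟨w⟩
  have hle := T.deleteEdges_le {e}
  have hq : (w.toPath.1.mapLe hle).IsPath := w.toPath.2.mapLe hle
  have hpq := congrArg (fun p : T.Path u v => p.1.edges)
    ((hT.subsingleton_path u v).elim ⟨p, hp⟩ ⟨_, hq⟩)
  simp only [Walk.edges_mapLe_eq_edges] at hpq
  have := w.toPath.1.edges_subset_edgeSet (hpq ▸ he)
  simp at this

theorem Reachable.exists_adj_of_not_reachable {u v : V} (hG : G.Reachable u v)
    (hH : ¬H.Reachable u v) : ∃ x y, G.Adj x y ∧ H.Reachable u x ∧ ¬H.Reachable u y := by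
  obtain ⟨p⟩ := hG
  obtain ⟨d, -, hx, hy⟩ := p.exists_boundary_dart {z | H.Reachable u z} .rfl hH
  exact ⟨d.fst, d.snd, d.adj, hx, hy⟩

theorem deleteEdges_sup_edge_deleteEdges_sup_edge {a b x y : V} (hab : T.Adj a b)
    (hxy : ¬(T.deleteEdges {s(a, b)}).Adj x y) :
    (T.deleteEdges {s(a, b)} ⊔ edge x y).deleteEdges {s(x, y)} ⊔ edge a b = T := by
  have hab' : s(a, b) ∈ T.edgeSet := hab
  have hab_diag : ¬s(a, b).IsDiag := T.not_isDiag_of_mem_edgeSet hab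
  have hxy' : s(x, y) ∈ T.edgeSet → s(x, y) = s(a, b) := fun h =>
    by_contra fun hne => hxy ((deleteEdges_adj ..).mpr ⟨h, hne⟩)
  apply edgeSet_injective
  ext e
  simp only [edge, edgeSet_sup, edgeSet_deleteEdges, edgeSet_fromEdgeSet, Set.mem_union,
    Set.mem_sdiff, Set.mem_singleton_iff, Sym2.mem_diagSet]
  grind

end SimpleGraph

theorem Finset.sum_le_mul_card_mul_sum_of_forall_exists {ι κ : Type*} [DecidableEq ι]
    {S D : Finset ι} {K : Finset κ} {w : ι → ℝ} {c : ℝ} (hc : 0 ≤ c)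
    (hw : ∀ j ∈ D, 0 ≤ w j) (g : ι → κ → ι)
    (h : ∀ i ∈ S, ∃ j ∈ D, ∃ k ∈ K, g j k = i ∧ w i ≤ c * w j) :
    ∑ i ∈ S, w i ≤ c * #K * ∑ j ∈ D, w j := by
  have hterm : ∀ p ∈ D ×ˢ K, 0 ≤ c * w p.1 := fun p hp => mul_nonneg hc (hw _ (mem_product.mp hp).1)
  calc ∑ i ∈ S, w i ≤ ∑ i ∈ S, ∑ p ∈ D ×ˢ K with g p.1 p.2 = i, c * w p.1 := by
        refine sum_le_sum fun i hi => ?_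
        obtain ⟨j, hj, k, hk, rfl, hle⟩ := h i hi
        exact hle.trans (single_le_sum (f := fun p : ι × κ => c * w p.1) (a := (j, k))
          (fun p hp => hterm p (mem_filter.mp hp).1)
          (mem_filter.mpr ⟨mem_product.mpr ⟨hj, hk⟩, rfl⟩))
    _ ≤ ∑ p ∈ D ×ˢ K, c * w p.1 :=
        sum_fiberwise_le_sum_of_sum_fiber_nonneg fun _ _ =>
          sum_nonneg fun p hp => hterm p (mem_filter.mp hp).1
    _ = c * #K * ∑ j ∈ D, w j := by
      simp only [sum_product, sum_const, nsmul_eq_mul, ← mul_sum]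
      ring

theorem Sym2.card_le_sq (α : Type*) [Fintype α] : Fintype.card (Sym2 α) ≤ Fintype.card α ^ 2 := by
  rw [Sym2.card, Nat.choose_two_right]
  refine Nat.div_le_of_le_mul ?_
  simp only [Nat.add_sub_cancel]
  nlinarith

theorem one_add_rpow_sub_one_add_rpow_ge {γ a b : ℝ} (hγ : 0 < γ) (ha : 0 ≤ a) (hab : a ≤ b)
    (hb : b ≤ 1 / 2) : 2 * γ / 3 * (b - a) ≤ (1 + b) ^ γ - (1 + a) ^ γ := by
  have hderiv : ∀ x, 0 ≤ x → HasDerivAt (fun x => (1 + x) ^ γ) (1 * γ * (1 + x) ^ (γ - 1)) x :=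
    fun x hx => ((hasDerivAt_id x).const_add 1).rpow_const (Or.inl (by simp; linarith))
  refine (convex_Icc (0 : ℝ) (1 / 2)).mul_sub_le_image_sub_of_le_deriv
    (f := fun x => (1 + x) ^ γ)
    ((continuous_const.add continuous_id).rpow_const fun _ => Or.inr hγ.le).continuousOn
    (fun x hx => (hderiv x (interior_subset hx).1).differentiableAt.differentiableWithinAt)
    (fun x hx => ?_) a ⟨ha, hab.trans hb⟩ b ⟨ha.trans hab, hb⟩ hab
  rw [interior_Icc] at hx
  rw [(hderiv x hx.1.le).deriv]
  have hinv : (1 + x)⁻¹ ≤ (1 + x) ^ (γ - 1) := by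
    rw [← Real.rpow_neg_one]
    exact Real.rpow_le_rpow_of_exponent_le (by linarith [hx.1]) (by linarith)
  have h23 : 2 / 3 ≤ (1 + x)⁻¹ := by
    rw [le_inv_comm₀ (by norm_num) (by linarith [hx.1])]
    linarith [hx.2]
  nlinarith

theorem AssumptionA.exists_invCDF_eq_rpow {μ : Measure ℝ} {α : ℝ} (hA : AssumptionA μ α) :
    ∃ cμ > (0 : ℝ), ∃ s₀ > (0 : ℝ), ∀ s, 0 < s → s ≤ s₀ → invCDF μ s = (s / cμ) ^ (1 / α) := by
  obtain ⟨hα, h0, cμ, hcμ, ρ, hρ, hF⟩ := hA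
  refine ⟨cμ, hcμ, cμ * ρ ^ α, by positivity, fun s hs hsρ => ?_⟩
  set t₀ := (s / cμ) ^ (1 / α)
  have hsc : 0 < s / cμ := div_pos hs hcμ
  have ht₀ : t₀ ^ α = s / cμ := by
    rw [← Real.rpow_mul hsc.le, one_div_mul_cancel hα.ne', Real.rpow_one]
  have ht₀ρ : t₀ ≤ ρ := by
    rw [← Real.rpow_le_rpow_iff (by positivity) hρ.le hα, ht₀, div_le_iff₀' hcμ]
    exact hsρ
  have hFt₀ : (μ (Set.Iic t₀)).toReal = s := by
    rw [hF t₀ (by positivity) ht₀ρ, ht₀, mul_div_cancel₀ _ hcμ.ne']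
  refine IsLeast.csInf_eq ⟨hFt₀.ge, fun r hr => le_of_not_gt fun hrt => ?_⟩
  rcases lt_or_ge r 0 with hr0 | hr0
  · rw [Set.mem_ofPred_eq, measure_mono_null (Set.Iic_subset_Iio.mpr hr0) h0] at hr
    simp at hr
    linarith
  · rw [Set.mem_ofPred_eq, hF r hr0 (hrt.le.trans ht₀ρ)] at hr
    have := mul_lt_mul_of_pos_left (Real.rpow_lt_rpow hr0 hrt hα) hcμ
    rw [ht₀, mul_div_cancel₀ _ hcμ.ne'] at this
    linarith

theorem invCDF_sub_invCDF_ge_of_eq_rpow {μ : Measure ℝ} {α cμ s₀ n a b : ℝ} (hα : 0 < α)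
    (hcμ : 0 < cμ) (hinvCDF : ∀ s, 0 < s → s ≤ s₀ → invCDF μ s = (s / cμ) ^ (1 / α))
    (hn : 0 < n) (ha : 0 ≤ a) (hab : a ≤ b) (hb : b ≤ 1 / 2) (hbs₀ : (1 + b) / n ≤ s₀) :
    2 / (3 * α) / cμ ^ (1 / α) * (b - a) / n ^ (1 / α) ≤
      invCDF μ ((1 + b) / n) - invCDF μ ((1 + a) / n) := by
  have hsplit : ∀ s : ℝ, 1 ≤ s → s / n ≤ s₀ →
      invCDF μ (s / n) = s ^ (1 / α) / (n ^ (1 / α) * cμ ^ (1 / α)) := fun s hs hss₀ => by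
    rw [hinvCDF _ (by positivity) hss₀, div_div, Real.div_rpow (by positivity) (by positivity),
      Real.mul_rpow hn.le hcμ.le]
  rw [hsplit _ (by linarith) hbs₀, hsplit _ (by linarith) (le_trans (by gcongr) hbs₀), ← sub_div]
  have key := one_add_rpow_sub_one_add_rpow_ge (one_div_pos.mpr hα) ha hab hb
  calc 2 / (3 * α) / cμ ^ (1 / α) * (b - a) / n ^ (1 / α)
      = 2 * (1 / α) / 3 * (b - a) / (n ^ (1 / α) * cμ ^ (1 / α)) := by ring
    _ ≤ _ := by gcongr

section RSTRE

open SimpleGraph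

variable {V : Type*} [Fintype V]

theorem treeGibbsWeight_pos (β : ℝ) (ω : Sym2 V → ℝ) (T : SimpleGraph V) :
    0 < treeGibbsWeight β ω T :=
  prod_pos fun _ _ => Real.exp_pos _

theorem treeGibbsWeight_eq_prod_of_edgeSet_eq (β : ℝ) (ω : Sym2 V → ℝ) {T : SimpleGraph V}
    {s : Finset (Sym2 V)} (h : T.edgeSet = s) :
    treeGibbsWeight β ω T = ∏ e ∈ s, Real.exp (-β * ω e) := by
  rw [treeGibbsWeight]
  congr 1
  exact coe_injective (by rw [coe_edgeFinset, h])

theorem treeGibbsWeight_deleteEdges_sup_edge_mul [DecidableEq V] (β : ℝ) (ω : Sym2 V → ℝ)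
    {T : SimpleGraph V} {a b x y : V} (hab : T.Adj a b) (hne : x ≠ y)
    (hxy : ¬(T.deleteEdges {s(a, b)}).Adj x y) :
    treeGibbsWeight β ω (T.deleteEdges {s(a, b)} ⊔ edge x y) * Real.exp (-β * ω s(a, b)) =
      treeGibbsWeight β ω T * Real.exp (-β * ω s(x, y)) := by
  have hxy_notMem : s(x, y) ∉ T.edgeFinset.erase s(a, b) := by
    rw [mem_erase, mem_edgeFinset, mem_edgeSet]
    exact fun ⟨hne', hadj⟩ => hxy ((deleteEdges_adj ..).mpr ⟨hadj, hne'⟩)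
  have hedges : (T.deleteEdges {s(a, b)} ⊔ edge x y).edgeSet =
      ↑(insert s(x, y) (T.edgeFinset.erase s(a, b))) := by
    ext e
    simp [edgeSet_edge_of_ne hne]
  have hab_mem : s(a, b) ∈ T.edgeFinset := mem_edgeFinset.mpr hab
  rw [treeGibbsWeight_eq_prod_of_edgeSet_eq β ω hedges, prod_insert hxy_notMem,
    treeGibbsWeight, ← mul_prod_erase T.edgeFinset _ hab_mem]
  ring

theorem quenchedP_nonneg [DecidableEq V] (G : SimpleGraph V) (β : ℝ) (ω : Sym2 V → ℝ)
    (A : Set (SimpleGraph V)) : 0 ≤ quenchedP G β ω A :=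
  div_nonneg (sum_nonneg fun T _ => (treeGibbsWeight_pos β ω T).le)
    (sum_nonneg fun T _ => (treeGibbsWeight_pos β ω T).le)

theorem quenchedP_le_one [DecidableEq V] (G : SimpleGraph V) (β : ℝ) (ω : Sym2 V → ℝ)
    (A : Set (SimpleGraph V)) : quenchedP G β ω A ≤ 1 := by
  refine div_le_one_of_le₀ (sum_le_sum_of_subset_of_nonneg ?_ fun T _ _ =>
    (treeGibbsWeight_pos β ω T).le) (sum_nonneg fun T _ => (treeGibbsWeight_pos β ω T).le)
  intro T hT
  rw [mem_filter] at hT ⊢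
  exact ⟨hT.1, hT.2.1⟩

theorem quenchedP_le_of_forall_exists_exchange [DecidableEq V] (G : SimpleGraph V) (β : ℝ)
    (ω : Sym2 V → ℝ) (A : Set (SimpleGraph V)) {c : ℝ} (hc : 0 ≤ c)
    (h : ∀ T, IsSpanningTree G T → T ∈ A → ∃ T', IsSpanningTree G T' ∧ ∃ e f : Sym2 V,
      T = T'.deleteEdges {f} ⊔ fromEdgeSet {e} ∧
        treeGibbsWeight β ω T ≤ c * treeGibbsWeight β ω T') :
    quenchedP G β ω A ≤ Fintype.card (Sym2 V) ^ 2 * c := by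
  have hnum := sum_le_mul_card_mul_sum_of_forall_exists hc
    (S := univ.filter fun T => IsSpanningTree G T ∧ T ∈ A)
    (D := univ.filter fun T => IsSpanningTree G T) (K := (univ : Finset (Sym2 V × Sym2 V)))
    (fun T _ => (treeGibbsWeight_pos β ω T).le)
    (fun T' p => T'.deleteEdges {p.2} ⊔ fromEdgeSet {p.1})
    fun T hT => by
      obtain ⟨hTG, hTA⟩ := (mem_filter.mp hT).2
      obtain ⟨T', hT', e, f, rfl, hle⟩ := h T hTG hTA
      exact ⟨T', mem_filter.mpr ⟨mem_univ _, hT'⟩, (e, f), mem_univ _, rfl, hle⟩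
  refine div_le_of_le_mul₀ (sum_nonneg fun T _ => (treeGibbsWeight_pos β ω T).le)
    (by positivity) (hnum.trans_eq ?_)
  rw [card_univ, Fintype.card_prod]
  push_cast
  ring

def openPathHeavyEdgeEvent (μ : Measure ℝ) (ω : Sym2 V → ℝ) (p q : ℝ) : Set (SimpleGraph V) :=
  {T | ∃ u v : V, u ≠ v ∧ (openGraph μ ω p).Reachable u v ∧
    ∃ γ : T.Walk u v, γ.IsPath ∧ ∃ e ∈ γ.edges, invCDF μ q < ω e}

theorem exists_exchange_of_mem_openPathHeavyEdgeEvent [DecidableEq V] {μ : Measure ℝ}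
    {ω : Sym2 V → ℝ} {β p q : ℝ} (hβ : 0 ≤ β) {T : SimpleGraph V} (hT : T.IsTree)
    (hTA : T ∈ openPathHeavyEdgeEvent μ ω p q) :
    ∃ T', T'.IsTree ∧ ∃ e f : Sym2 V, T = T'.deleteEdges {f} ⊔ fromEdgeSet {e} ∧
      treeGibbsWeight β ω T ≤
        Real.exp (-β * (invCDF μ q - invCDF μ p)) * treeGibbsWeight β ω T' := by
  obtain ⟨u, v, -, huv, γ, hγ, e, he, heavy⟩ := hTA
  induction e using Sym2.ind with | h a b => ?_
  have hab : T.Adj a b := γ.adj_of_mem_edges he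
  set H := T.deleteEdges {s(a, b)}
  obtain ⟨x, y, ⟨hne, hlight⟩, hux, huy⟩ :=
    huv.exists_adj_of_not_reachable (hT.isAcyclic.not_reachable_deleteEdges_of_mem_edges hγ he)
  have hnreach : ¬H.Reachable x y := fun h => huy (hux.trans h)
  have hnadj : ¬H.Adj x y := fun h => hnreach h.reachable
  refine ⟨H ⊔ edge x y, hT.deleteEdges_sup_edge_of_not_reachable hnreach, s(a, b), s(x, y),
    (deleteEdges_sup_edge_deleteEdges_sup_edge hab hnadj).symm, ?_⟩
  have hexp : Real.exp (-β * ω s(a, b)) ≤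
      Real.exp (-β * (invCDF μ q - invCDF μ p)) * Real.exp (-β * ω s(x, y)) := by
    have hgap : invCDF μ q - invCDF μ p ≤ ω s(a, b) - ω s(x, y) := by linarith
    rw [← Real.exp_add, Real.exp_le_exp]
    nlinarith [mul_le_mul_of_nonneg_left hgap hβ]
  refine le_of_mul_le_mul_right ?_ (Real.exp_pos (-β * ω s(x, y)))
  calc treeGibbsWeight β ω T * Real.exp (-β * ω s(x, y))
      = treeGibbsWeight β ω (H ⊔ edge x y) * Real.exp (-β * ω s(a, b)) :=
        (treeGibbsWeight_deleteEdges_sup_edge_mul β ω hab hne hnadj).symm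
    _ ≤ treeGibbsWeight β ω (H ⊔ edge x y) *
          (Real.exp (-β * (invCDF μ q - invCDF μ p)) * Real.exp (-β * ω s(x, y))) :=
        mul_le_mul_of_nonneg_left hexp (treeGibbsWeight_pos β ω _).le
    _ = _ := by ring

theorem quenchedP_openPathHeavyEdgeEvent_le [DecidableEq V] (μ : Measure ℝ) (ω : Sym2 V → ℝ)
    {β p q : ℝ} (hβ : 0 ≤ β) :
    quenchedP ⊤ β ω (openPathHeavyEdgeEvent μ ω p q) ≤
      Fintype.card V ^ 4 * Real.exp (-β * (invCDF μ q - invCDF μ p)) := by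
  have hcard : (Fintype.card (Sym2 V) : ℝ) ^ 2 ≤ (Fintype.card V : ℝ) ^ 4 :=
    calc (Fintype.card (Sym2 V) : ℝ) ^ 2 ≤ ((Fintype.card V : ℝ) ^ 2) ^ 2 := by
          gcongr; exact_mod_cast Sym2.card_le_sq V
      _ = (Fintype.card V : ℝ) ^ 4 := by ring
  refine (quenchedP_le_of_forall_exists_exchange _ _ _ _ (Real.exp_pos _).le
    fun T hT hTA => ?_).trans (by gcongr)
  obtain ⟨T', hT', e, f, hTT', hle⟩ := exists_exchange_of_mem_openPathHeavyEdgeEvent hβ hT.2 hTA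
  exact ⟨T', ⟨le_top, hT'⟩, e, f, hTT', hle⟩

theorem avgP_le_of_forall_quenchedP_le [DecidableEq V] (μ : Measure ℝ) [IsProbabilityMeasure μ]
    (G : SimpleGraph V) (β : ℝ) (A : (Sym2 V → ℝ) → Set (SimpleGraph V)) {C : ℝ}
    (h : ∀ ω, quenchedP G β ω (A ω) ≤ C) : avgP μ G β A ≤ C := by
  have : IsProbabilityMeasure (envMeasure μ : Measure (Sym2 V → ℝ)) := by
    rw [envMeasure]; infer_instance
  have hnorm : ∀ ω, ‖quenchedP G β ω (A ω)‖ ≤ C := fun ω => by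
    rw [Real.norm_eq_abs, abs_of_nonneg (quenchedP_nonneg G β ω (A ω))]
    exact h ω
  calc avgP μ G β A ≤ ‖avgP μ G β A‖ := Real.le_norm_self _
    _ ≤ C * (envMeasure μ).real Set.univ := norm_integral_le_of_norm_le_const (.of_forall hnorm)
    _ = C := by simp

end RSTRE

theorem stmt_13_general (μ : Measure ℝ) [IsProbabilityMeasure μ] (α : ℝ)
    (hA : AssumptionA μ α) (β ε t : ℕ → ℝ)
    (hβ : ∀ n, 0 ≤ β n)
    (ht : ∀ n, 1 ≤ t n)
    (htε : Filter.Tendsto (fun n => t n * ε n) Filter.atTop (nhds 0)) :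
    ∃ cg > (0:ℝ),
      ∀ᶠ n : ℕ in Filter.atTop,
        avgP μ (⊤ : SimpleGraph (Fin n)) (β n) (fun ω =>
            {T : SimpleGraph (Fin n) |
              ∃ u v : Fin n, u ≠ v ∧
                (openGraph μ ω ((1 + ε n) / n)).Reachable u v ∧
                ∃ q : T.Walk u v, q.IsPath ∧
                  ∃ e ∈ q.edges, invCDF μ ((1 + t n * ε n) / n) < ω e})
          ≤ (n : ℝ) ^ 5 *
              Real.exp (-cg * (t n - 1) * β n * ε n / (n : ℝ) ^ (1 / α)) := by
  obtain ⟨cμ, hcμ, s₀, hs₀, hinvCDF⟩ := hA.exists_invCDF_eq_rpow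
  have hα : 0 < α := hA.1
  have hcg : 0 < 2 / (3 * α) / cμ ^ (1 / α) := by positivity
  refine ⟨_, hcg, ?_⟩
  filter_upwards [htε.eventually (ge_mem_nhds (by norm_num : (0 : ℝ) < 1 / 2)),
    (tendsto_const_div_atTop_nhds_zero_nat (3 / 2)).eventually (ge_mem_nhds hs₀),
    Filter.eventually_ge_atTop 1] with n htε_le hs₀_le hn
  have hn' : (1 : ℝ) ≤ n := by exact_mod_cast hn
  rcases lt_or_ge (ε n) 0 with hε | hε
  · refine (avgP_le_of_forall_quenchedP_le μ _ _ _ fun ω => quenchedP_le_one _ _ _ _).trans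
      (one_le_mul_of_one_le_of_one_le (one_le_pow₀ hn') (Real.one_le_exp ?_))
    have := mul_nonneg (mul_nonneg (mul_nonneg hcg.le (sub_nonneg.mpr (ht n))) (hβ n))
      (neg_nonneg.mpr hε.le)
    exact div_nonneg (by linarith) (by positivity)
  · have hgap := invCDF_sub_invCDF_ge_of_eq_rpow hα hcμ hinvCDF (n := n) (by positivity) hε
      (le_mul_of_one_le_left hε (ht n)) htε_le (le_trans (by gcongr; linarith) hs₀_le)
    refine (avgP_le_of_forall_quenchedP_le μ _ _ _ fun ω =>
      quenchedP_openPathHeavyEdgeEvent_le μ ω (hβ n)).trans ?_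
    rw [Fintype.card_fin]
    gcongr ?_ * Real.exp ?_
    · exact pow_le_pow_right₀ hn' (by norm_num)
    · calc _ ≤ -(β n * (2 / (3 * α) / cμ ^ (1 / α) * (t n * ε n - ε n) / n ^ (1 / α))) := by
            linarith [mul_le_mul_of_nonneg_left hgap (hβ n)]
        _ = _ := by ring

/-- gap in edge weights. -/
theorem stmt_13 (μ : Measure ℝ) [IsProbabilityMeasure μ] (α : ℝ)
    (hA : AssumptionA μ α) (β ε t : ℕ → ℝ)
    (hβ : ∀ n, 0 ≤ β n)
    (hε : Filter.Tendsto ε Filter.atTop (nhds 0))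
    (ht : ∀ n, 1 ≤ t n)
    (htε : Filter.Tendsto (fun n => t n * ε n) Filter.atTop (nhds 0)) :
    ∃ cg > (0:ℝ),
      ∀ᶠ n : ℕ in Filter.atTop,
        avgP μ (⊤ : SimpleGraph (Fin n)) (β n) (fun ω =>
            {T : SimpleGraph (Fin n) |
              ∃ u v : Fin n, u ≠ v ∧
                (openGraph μ ω ((1 + ε n) / n)).Reachable u v ∧
                ∃ q : T.Walk u v, q.IsPath ∧
                  ∃ e ∈ q.edges, invCDF μ ((1 + t n * ε n) / n) < ω e})
          ≤ (n : ℝ) ^ 5 *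
              Real.exp (-cg * (t n - 1) * β n * ε n / (n : ℝ) ^ (1 / α)) :=
  stmt_13_general μ α hA β ε t hβ ht htε
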